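/- arXiv:1611.04916 — 3 statements merged into one kernel-verified Lean document; each statement's English description precedes it below -/
import Mathlib

section
/- For all Schwartz functions φ, φ' on ℍⁿ and all Schwartz functions η, η' on ℝ one has the factorization (φ ∗₂ η) ∗_{ℍⁿ} (φ' ∗₂ η') = (φ ∗_{ℍⁿ} φ') ∗₂ (η ∗_ℝ η'), where η ∗_ℝ η' is ordinary convolution on ℝ. -/
open MeasureTheory Complex SchwartzMap Filter
open scoped BigOperators ComplexConjugate FourierTransform ENNReal

noncomputable section

/-- The underlying space of the Heisenberg group ℍⁿ ≅ ℂⁿ × ℝ. -/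
abbrev H (n : ℕ) := (Fin n → ℂ) × ℝ

/-- Heisenberg group multiplication: (z,t)∘(z',t') = (z+z', t+t'+2 Im(z·conj z')). -/
def Hmul {n : ℕ} (x y : H n) : H n :=
  (x.1 + y.1, x.2 + y.2 + 2 * (∑ j, x.1 j * conj (y.1 j)).im)

/-- Heisenberg group inverse: (z,t)⁻¹ = (-z,-t). -/
def Hinv {n : ℕ} (x : H n) : H n := (-x.1, -x.2)

/-- Homogeneous norm |(z,t)| = (|z|² + |t|)^{1/2}. -/
def Hnorm {n : ℕ} (x : H n) : ℝ := Real.sqrt ((∑ j, Complex.normSq (x.1 j)) + |x.2|)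

/-- Convolution on ℍⁿ : (f∗g)(x) = ∫ f(x∘y⁻¹) g(y) dy. -/
def Hconv {n : ℕ} (f g : H n → ℝ) (x : H n) : ℝ := ∫ y, f (Hmul x (Hinv y)) * g y

/-- Partial convolution in the central variable: (f ∗₂ h)(z,u) = ∫ f(z,u−v) h(v) dv. -/
def conv2 {n : ℕ} (f : H n → ℝ) (h : ℝ → ℝ) (x : H n) : ℝ := ∫ v, f (x.1, x.2 - v) * h v

/-- Ordinary convolution on ℝ. -/
def convR (h k : ℝ → ℝ) (x : ℝ) : ℝ := ∫ v, h (x - v) * k v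

/-- Convolution on the direct product group ℍⁿ × ℝ. -/
def PConv {n : ℕ} (F G : H n × ℝ → ℝ) (p : H n × ℝ) : ℝ :=
  ∫ q : H n × ℝ, F (Hmul p.1 (Hinv q.1), p.2 - q.2) * G q

/-- The projection π : (πF)(z,u) = ∫ F((z,u−v),v) dv. -/
def piProj {n : ℕ} (F : H n × ℝ → ℝ) (x : H n) : ℝ := ∫ v, F ((x.1, x.2 - v), v)

/-- Nonisotropic dilation ψ_s(z,u) = s^{−2n−2} ψ(z/s, u/s²). -/
def dil1 {n : ℕ} (ψ : H n → ℝ) (s : ℝ) (x : H n) : ℝ :=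
  (s ^ (2 * n + 2))⁻¹ * ψ ((s : ℂ)⁻¹ • x.1, x.2 / s ^ 2)

/-- Dilation on ℝ: η_t(v) = t⁻¹ η(v/t). -/
def dil2 (η : ℝ → ℝ) (t : ℝ) (v : ℝ) : ℝ := t⁻¹ * η (v / t)

/-- All moments of a function on ℝ vanish. -/
def momentsVanishR (η : ℝ → ℝ) : Prop := ∀ γ : ℕ, ∫ v : ℝ, v ^ γ * η v = 0

/-- All moments of a function on ℍⁿ vanish. -/
def momentsVanishH {n : ℕ} (ψ : H n → ℝ) : Prop :=
  ∀ (α β : Fin n → ℕ) (γ : ℕ),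
    ∫ x : H n, (∏ j, ((x.1 j).re ^ α j * (x.1 j).im ^ β j)) * x.2 ^ γ * ψ x = 0

/-- A function on ℍⁿ is radial in the ℂⁿ-variable. -/
def HRadial {n : ℕ} (ψ : H n → ℝ) : Prop :=
  ∀ (z z' : Fin n → ℂ) (u : ℝ),
    (∑ j, Complex.normSq (z j)) = (∑ j, Complex.normSq (z' j)) → ψ (z, u) = ψ (z', u)

/-- The product moment conditions defining S_∞(ℍⁿ × ℝ). -/
def SInf {n : ℕ} (F : H n × ℝ → ℝ) : Prop :=
  (∀ (α β : Fin n → ℕ) (γ : ℕ) (v : ℝ),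
    ∫ x : H n, (∏ j, ((x.1 j).re ^ α j * (x.1 j).im ^ β j)) * x.2 ^ γ * F (x, v) = 0) ∧
  (∀ (γ : ℕ) (x : H n), ∫ v : ℝ, v ^ γ * F (x, v) = 0)

/-- The flag component function ψ_{s,t} = ψ^{(1)}_s ∗₂ ψ^{(2)}_t. -/
def psist {n : ℕ} (ψa : H n → ℝ) (ψb : ℝ → ℝ) (s t : ℝ) : H n → ℝ :=
  conv2 (dil1 ψa s) (dil2 ψb t)

/-- The product kernel Ψ_{s,t}((z,u),r) = ψ^{(1)}_s(z,u) ψ^{(2)}_t(r) on ℍⁿ × ℝ. -/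
def PsiST {n : ℕ} (ψa : H n → ℝ) (ψb : ℝ → ℝ) (s t : ℝ) : H n × ℝ → ℝ :=
  fun p => dil1 ψa s p.1 * dil2 ψb t p.2



instance haarH (n : ℕ) : Measure.IsAddHaarMeasure (volume : Measure (H n)) :=
  Measure.prod.instIsAddHaarMeasure _ _

def Tw {n : ℕ} (z w : Fin n → ℂ) : ℝ := 2 * (∑ j, z j * conj (w j)).im

lemma hmul_hinv {n : ℕ} (a y : H n) :
    Hmul a (Hinv y) = (a.1 - y.1, a.2 - y.2 - Tw a.1 y.1) := by
  simp only [Hmul, Hinv, Tw, Prod.mk.injEq, map_neg, mul_neg, Finset.sum_neg_distrib,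
    Complex.neg_im, Pi.neg_apply]
  exact ⟨(sub_eq_add_neg _ _).symm, by ring⟩

lemma Tw_continuous {n : ℕ} (z : Fin n → ℂ) : Continuous (Tw z) := by
  unfold Tw
  exact continuous_const.mul (Complex.continuous_im.comp
    (continuous_finset_sum _ fun j _ =>
      continuous_const.mul (Complex.continuous_conj.comp (continuous_apply j))))

def shear1 (n : ℕ) : (H n × ℝ × ℝ) ≃ᵐ (H n × ℝ × ℝ) :=
{ toEquiv :=
  { toFun := fun q => (q.1 - ((0 : Fin n → ℂ), q.2.2), q.2)
    invFun := fun q => (q.1 + ((0 : Fin n → ℂ), q.2.2), q.2)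
    left_inv := fun q => by simp [Prod.ext_iff]
    right_inv := fun q => by simp [Prod.ext_iff] }
  measurable_toFun := (measurable_fst.sub
      (measurable_const.prodMk measurable_snd.snd)).prodMk measurable_snd
  measurable_invFun := (measurable_fst.add
      (measurable_const.prodMk measurable_snd.snd)).prodMk measurable_snd }

lemma shear1_apply {n : ℕ} (q : H n × ℝ × ℝ) :
    shear1 n q = (q.1 - ((0 : Fin n → ℂ), q.2.2), q.2) := rfl

lemma mp_shear1 (n : ℕ) : MeasurePreserving (⇑(shear1 n)) volume volume := by
  have hin : MeasurePreserving
      (fun r : (ℝ × ℝ) × H n => (r.1, r.2 - ((0 : Fin n → ℂ), r.1.2)))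
      ((volume : Measure (ℝ × ℝ)).prod volume)
      ((volume : Measure (ℝ × ℝ)).prod volume) :=
    (MeasurePreserving.id volume).skew_product
      (g := fun (p : ℝ × ℝ) (y : H n) => y - ((0 : Fin n → ℂ), p.2))
      (measurable_snd.sub (measurable_const.prodMk measurable_fst.snd))
      (Filter.Eventually.of_forall fun (p : ℝ × ℝ) =>
        (measurePreserving_sub_right volume ((0 : Fin n → ℂ), p.2)).map_eq)
  exact (Measure.measurePreserving_swap).comp (hin.comp (Measure.measurePreserving_swap))

def e2 (n : ℕ) : ((ℝ × ℝ) × H n) ≃ᵐ (H n × ℝ × ℝ) :=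
{ toEquiv :=
  { toFun := fun r => (r.2, (r.1.1 - r.1.2, r.1.2))
    invFun := fun q => ((q.2.1 + q.2.2, q.2.2), q.1)
    left_inv := fun r => by simp [Prod.ext_iff]
    right_inv := fun q => by simp [Prod.ext_iff] }
  measurable_toFun := measurable_snd.prodMk
      ((measurable_fst.fst.sub measurable_fst.snd).prodMk measurable_fst.snd)
  measurable_invFun := ((measurable_snd.fst.add measurable_snd.snd).prodMk
      measurable_snd.snd).prodMk measurable_fst }

lemma e2_apply {n : ℕ} (r : (ℝ × ℝ) × H n) :
    e2 n r = (r.2, (r.1.1 - r.1.2, r.1.2)) := rfl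

lemma mp_e2 (n : ℕ) : MeasurePreserving (⇑(e2 n)) volume volume := by
  have hσ : MeasurePreserving (fun p : ℝ × ℝ => (p.1 - p.2, p.2))
      ((volume : Measure ℝ).prod volume) ((volume : Measure ℝ).prod volume) :=
    measurePreserving_sub_prod volume volume
  have hsk : MeasurePreserving
      (fun r : (ℝ × ℝ) × H n => ((r.1.1 - r.1.2, r.1.2), r.2))
      ((volume : Measure (ℝ × ℝ)).prod volume)
      ((volume : Measure (ℝ × ℝ)).prod volume) :=
    hσ.skew_product (g := fun _ y => y) measurable_snd
      (Filter.Eventually.of_forall fun _ => Measure.map_id)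
  exact (Measure.measurePreserving_swap).comp hsk


/-- (φ ∗₂ η) ∗_{ℍⁿ} (φ' ∗₂ η') = (φ ∗_{ℍⁿ} φ') ∗₂ (η ∗_ℝ η'). -/
theorem statement2 (n : ℕ) (φ φ' : SchwartzMap (H n) ℝ) (η η' : SchwartzMap ℝ ℝ) (x : H n) :
    Hconv (conv2 ⇑φ ⇑η) (conv2 ⇑φ' ⇑η') x = conv2 (Hconv ⇑φ ⇑φ') (convR ⇑η ⇑η') x := by
  classical
  -- the master function
  set M : H n × ℝ × ℝ → ℝ := fun q =>
    φ (x.1 - q.1.1, x.2 - q.1.2 - Tw x.1 q.1.1 - q.2.1 - q.2.2) * η q.2.1 *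
      (φ' q.1 * η' q.2.2) with hM
  have hMc : Continuous M := by
    apply Continuous.mul
    · apply Continuous.mul
      · exact φ.continuous.comp
          ((continuous_const.sub continuous_fst.fst).prodMk
            ((((continuous_const.sub continuous_fst.snd).sub
              ((Tw_continuous x.1).comp continuous_fst.fst)).sub
                continuous_snd.fst).sub continuous_snd.snd))
      · exact η.continuous.comp continuous_snd.fst
    · exact (φ'.continuous.comp continuous_fst).mul (η'.continuous.comp continuous_snd.snd)
  have hηη : Integrable (fun p : ℝ × ℝ => η p.1 * η' p.2) volume := by
    rw [Measure.volume_eq_prod ℝ ℝ]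
    exact η.integrable.mul_prod η'.integrable
  have hgint : Integrable (fun q : H n × ℝ × ℝ => φ' q.1 * (η q.2.1 * η' q.2.2)) volume := by
    rw [Measure.volume_eq_prod (H n) (ℝ × ℝ)]
    exact φ'.integrable.mul_prod hηη
  set C : ℝ := SchwartzMap.seminorm ℝ 0 0 φ with hCdef
  have hφC : ∀ p : H n, ‖φ p‖ ≤ C := fun p => norm_le_seminorm ℝ φ p
  have hMint : Integrable M volume := by
    refine (hgint.norm.const_mul C).mono' hMc.aestronglyMeasurable
      (Filter.Eventually.of_forall fun q => ?_)
    calc ‖M q‖ = ‖φ (x.1 - q.1.1, x.2 - q.1.2 - Tw x.1 q.1.1 - q.2.1 - q.2.2)‖ *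
          ‖η q.2.1‖ * (‖φ' q.1‖ * ‖η' q.2.2‖) := by
          simp [hM, norm_mul]
      _ ≤ C * ‖η q.2.1‖ * (‖φ' q.1‖ * ‖η' q.2.2‖) := by
          gcongr
          exact hφC _
      _ = C * ‖φ' q.1 * (η q.2.1 * η' q.2.2)‖ := by
          rw [norm_mul, norm_mul]; ring
  -- pointwise identifications
  have hpt1 : ∀ q : H n × ℝ × ℝ, M (shear1 n q) =
      (φ (x.1 - q.1.1, x.2 - q.1.2 - Tw x.1 q.1.1 - q.2.1) * η q.2.1) *
        (φ' (q.1.1, q.1.2 - q.2.2) * η' q.2.2) := by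
    intro q
    have h1 : q.1 - ((0 : Fin n → ℂ), q.2.2) = (q.1.1, q.1.2 - q.2.2) := by
      ext <;> simp
    rw [shear1_apply, h1]
    simp only [hM]
    have harg : x.2 - (q.1.2 - q.2.2) - Tw x.1 q.1.1 - q.2.1 - q.2.2
        = x.2 - q.1.2 - Tw x.1 q.1.1 - q.2.1 := by ring
    rw [harg]
  have hpt2 : ∀ r : (ℝ × ℝ) × H n, M (e2 n r) =
      φ (x.1 - r.2.1, x.2 - r.1.1 - r.2.2 - Tw x.1 r.2.1) * φ' r.2 *
        (η (r.1.1 - r.1.2) * η' r.1.2) := by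
    intro r
    rw [e2_apply]
    simp only [hM]
    have harg : x.2 - r.2.2 - Tw x.1 r.2.1 - (r.1.1 - r.1.2) - r.1.2
        = x.2 - r.1.1 - r.2.2 - Tw x.1 r.2.1 := by ring
    rw [harg]
    ring
  -- integrability of the two composed functions
  have hMe1 : Integrable (fun q : H n × ℝ × ℝ => M (shear1 n q)) volume :=
    ((mp_shear1 n).integrable_comp_emb (shear1 n).measurableEmbedding).2 hMint
  have hMe2 : Integrable (fun r : (ℝ × ℝ) × H n => M (e2 n r)) volume :=
    ((mp_e2 n).integrable_comp_emb (e2 n).measurableEmbedding).2 hMint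
  have hF : Integrable (fun q : H n × ℝ × ℝ =>
      (φ (x.1 - q.1.1, x.2 - q.1.2 - Tw x.1 q.1.1 - q.2.1) * η q.2.1) *
        (φ' (q.1.1, q.1.2 - q.2.2) * η' q.2.2)) volume :=
    hMe1.congr (Filter.Eventually.of_forall hpt1)
  have hG : Integrable (fun r : (ℝ × ℝ) × H n =>
      φ (x.1 - r.2.1, x.2 - r.1.1 - r.2.2 - Tw x.1 r.2.1) * φ' r.2 *
        (η (r.1.1 - r.1.2) * η' r.1.2)) volume :=
    hMe2.congr (Filter.Eventually.of_forall hpt2)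
  -- LHS = ∫ M
  have lhs_eq : Hconv (conv2 ⇑φ ⇑η) (conv2 ⇑φ' ⇑η') x = ∫ q : H n × ℝ × ℝ, M q := by
    calc Hconv (conv2 ⇑φ ⇑η) (conv2 ⇑φ' ⇑η') x
        = ∫ y : H n, (∫ v, φ (x.1 - y.1, x.2 - y.2 - Tw x.1 y.1 - v) * η v) *
            (∫ w, φ' (y.1, y.2 - w) * η' w) := by
          simp only [Hconv, conv2, hmul_hinv]
      _ = ∫ y : H n, ∫ p : ℝ × ℝ,
            (φ (x.1 - y.1, x.2 - y.2 - Tw x.1 y.1 - p.1) * η p.1) *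
              (φ' (y.1, y.2 - p.2) * η' p.2) := by
          refine integral_congr_ae (Filter.Eventually.of_forall fun y => ?_)
          rw [Measure.volume_eq_prod]
          exact (integral_prod_mul _ _).symm
      _ = ∫ q : H n × (ℝ × ℝ),
            (φ (x.1 - q.1.1, x.2 - q.1.2 - Tw x.1 q.1.1 - q.2.1) * η q.2.1) *
              (φ' (q.1.1, q.1.2 - q.2.2) * η' q.2.2) := by
          rw [Measure.volume_eq_prod (H n) (ℝ × ℝ)]
          exact integral_integral hF
      _ = ∫ q : H n × ℝ × ℝ, M (shear1 n q) :=
          (integral_congr_ae (Filter.Eventually.of_forall fun q => (hpt1 q).symm))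
      _ = ∫ q : H n × ℝ × ℝ, M q := (mp_shear1 n).integral_comp' M
  -- RHS = ∫ M
  have rhs_eq : conv2 (Hconv ⇑φ ⇑φ') (convR ⇑η ⇑η') x = ∫ q : H n × ℝ × ℝ, M q := by
    calc conv2 (Hconv ⇑φ ⇑φ') (convR ⇑η ⇑η') x
        = ∫ v, (∫ y : H n, φ (x.1 - y.1, x.2 - v - y.2 - Tw x.1 y.1) * φ' y) *
            (∫ w, η (v - w) * η' w) := by
          simp only [conv2, Hconv, convR, hmul_hinv]
      _ = ∫ v, ∫ w, (∫ y : H n, φ (x.1 - y.1, x.2 - v - y.2 - Tw x.1 y.1) * φ' y) *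
            (η (v - w) * η' w) := by
          refine integral_congr_ae (Filter.Eventually.of_forall fun v => ?_)
          exact (integral_const_mul _ _).symm
      _ = ∫ v, ∫ w, ∫ y : H n,
            φ (x.1 - y.1, x.2 - v - y.2 - Tw x.1 y.1) * φ' y * (η (v - w) * η' w) := by
          refine integral_congr_ae (Filter.Eventually.of_forall fun v => ?_)
          refine integral_congr_ae (Filter.Eventually.of_forall fun w => ?_)
          exact (integral_mul_const _ _).symm
      _ = ∫ p : ℝ × ℝ, ∫ y : H n,
            φ (x.1 - y.1, x.2 - p.1 - y.2 - Tw x.1 y.1) * φ' y *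
              (η (p.1 - p.2) * η' p.2) := by
          rw [Measure.volume_eq_prod ℝ ℝ]
          exact integral_integral hG.integral_prod_left
      _ = ∫ r : (ℝ × ℝ) × H n,
            φ (x.1 - r.2.1, x.2 - r.1.1 - r.2.2 - Tw x.1 r.2.1) * φ' r.2 *
              (η (r.1.1 - r.1.2) * η' r.1.2) := by
          rw [Measure.volume_eq_prod (ℝ × ℝ) (H n)]
          exact integral_integral hG
      _ = ∫ r : (ℝ × ℝ) × H n, M (e2 n r) :=
          (integral_congr_ae (Filter.Eventually.of_forall fun r => (hpt2 r).symm))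
      _ = ∫ q : H n × ℝ × ℝ, M q := (mp_e2 n).integral_comp' M
  rw [lhs_eq, rhs_eq]
end
end

section
/- Let F be a Schwartz function on ℍⁿ × ℝ and L a positive integer. There is a constant C, depending only on L, n and finitely many Schwartz seminorms of F, such that whenever |(z',u')| ≤ (1/(2γ))(1+|(z,u)|) and |r'| ≤ (1/2)(1+|r|), one has |F((z,u)∘(z',u')⁻¹, r−r') − F((z,u), r−r') − F((z,u)∘(z',u')⁻¹, r) + F((z,u), r)| ≤ C |(z',u')| (1+|(z,u)|)^{−(L+2n+2)} · |r'| (1+|r|)^{−(L+1)}. -/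
open MeasureTheory Complex SchwartzMap Filter
open scoped BigOperators ComplexConjugate FourierTransform ENNReal

noncomputable section

/-! The double difference is a mixed second difference of `F` on the product `ℍⁿ × ℝ`, with
Euclidean increment `x ∘ x'⁻¹ - x` in the first factor and `r'` in the second. Applying the mean
value theorem in each factor bounds it by `|r'| ‖x ∘ x'⁻¹ - x‖ ‖D²F(q, ρ)‖` for a point `(q, ρ)`
of the rectangle spanned by the two segments. The increment is `O(|x'| (1 + |x|))`. For
`x' = (z', u')` the segment from `x` to `x ∘ x'⁻¹` consists of the points `x ∘ (s z', s u')⁻¹`,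
`0 ≤ s ≤ 1`, and `|(s z', s u')| ≤ |x'|`, so the quasi-triangle inequality keeps `1 + |q|` comparable to `1 + |x|`; likewise `1 + |ρ|` is
comparable to `1 + |r|`. The Schwartz decay of `D²F` at `(q, ρ)` therefore produces both weights,
one power of `1 + |x|` being used up by the increment. -/

section Heisenberg

variable {n : ℕ}

lemma Hnorm_nonneg (x : H n) : 0 ≤ Hnorm x := Real.sqrt_nonneg _

lemma sqrt_sum_sq_norm_le_Hnorm (x : H n) : √(∑ j, ‖x.1 j‖ ^ 2) ≤ Hnorm x := by
  refine Real.sqrt_le_sqrt ?_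
  simp only [Complex.sq_norm]
  exact le_add_of_nonneg_right (abs_nonneg _)

lemma norm_fst_apply_le_Hnorm (x : H n) (j : Fin n) : ‖x.1 j‖ ≤ Hnorm x := by
  refine le_trans ?_ (sqrt_sum_sq_norm_le_Hnorm x)
  rw [← Real.sqrt_sq (norm_nonneg (x.1 j))]
  exact Real.sqrt_le_sqrt (Finset.single_le_sum (fun i _ => sq_nonneg ‖x.1 i‖) (Finset.mem_univ j))

lemma abs_snd_le_Hnorm_sq (x : H n) : |x.2| ≤ Hnorm x ^ 2 := by
  have hsum : 0 ≤ ∑ j, Complex.normSq (x.1 j) := Finset.sum_nonneg fun j _ => Complex.normSq_nonneg _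
  rw [Hnorm, Real.sq_sqrt (add_nonneg hsum (abs_nonneg _))]
  exact le_add_of_nonneg_left hsum

lemma abs_im_sum_mul_conj_le (x y : H n) :
    |(∑ j, x.1 j * conj (y.1 j)).im| ≤ Hnorm x * Hnorm y :=
  calc |(∑ j, x.1 j * conj (y.1 j)).im|
      ≤ ‖∑ j, x.1 j * conj (y.1 j)‖ := Complex.abs_im_le_norm _
    _ ≤ ∑ j, ‖x.1 j‖ * ‖y.1 j‖ := (norm_sum_le _ _).trans_eq (by simp)
    _ ≤ √(∑ j, ‖x.1 j‖ ^ 2) * √(∑ j, ‖y.1 j‖ ^ 2) := Real.sum_mul_le_sqrt_mul_sqrt _ _ _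
    _ ≤ Hnorm x * Hnorm y :=
      mul_le_mul (sqrt_sum_sq_norm_le_Hnorm x) (sqrt_sum_sq_norm_le_Hnorm y)
        (Real.sqrt_nonneg _) (Hnorm_nonneg x)

lemma Hnorm_le_mul_one_add_norm (q : H n) : Hnorm q ≤ (n + 1) * (1 + ‖q‖) := by
  rw [Hnorm, Real.sqrt_le_iff]
  refine ⟨by positivity, ?_⟩
  have hz : ∑ j, Complex.normSq (q.1 j) ≤ n * ‖q‖ ^ 2 :=
    calc ∑ j, Complex.normSq (q.1 j) ≤ ∑ _j : Fin n, ‖q‖ ^ 2 := by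
          refine Finset.sum_le_sum fun j _ => ?_
          rw [← Complex.sq_norm]
          exact pow_le_pow_left₀ (norm_nonneg _) ((norm_le_pi_norm q.1 j).trans (norm_fst_le q)) 2
      _ = n * ‖q‖ ^ 2 := by simp
  have ht : |q.2| ≤ ‖q‖ := norm_snd_le q
  have hn : (0 : ℝ) ≤ n := Nat.cast_nonneg n
  nlinarith [norm_nonneg q, mul_nonneg hn (norm_nonneg q), mul_nonneg hn (sq_nonneg ‖q‖)]

lemma Hnorm_smul_le (y : H n) {s : ℝ} (hs : s ∈ Set.Icc 0 1) :
    Hnorm ((s • y.1, s * y.2) : H n) ≤ Hnorm y := by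
  obtain ⟨hs0, hs1⟩ := hs
  refine Real.sqrt_le_sqrt (add_le_add ?_ ?_)
  · simp only [Pi.smul_apply, Complex.real_smul, Complex.normSq_mul, Complex.normSq_ofReal,
      ← Finset.mul_sum]
    exact mul_le_of_le_one_left (Finset.sum_nonneg fun j _ => Complex.normSq_nonneg _)
      (by nlinarith)
  · rw [abs_mul, abs_of_nonneg hs0]
    exact mul_le_of_le_one_left (abs_nonneg _) hs1

lemma Hmul_Hinv_sub (x y : H n) :
    Hmul x (Hinv y) - x = (-y.1, -y.2 - 2 * (∑ j, x.1 j * conj (y.1 j)).im) := by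
  simp only [Hmul, Hinv, Prod.ext_iff, Prod.fst_sub, Prod.snd_sub, Pi.neg_apply, map_neg,
    mul_neg, Finset.sum_neg_distrib, Complex.neg_im]
  constructor <;> ring

lemma Hmul_Hinv_Hmul (x y : H n) : Hmul (Hmul x (Hinv y)) y = x := by
  have h : (∑ j, y.1 j * conj (y.1 j)).im = 0 := by
    simp [Complex.mul_conj, ← Complex.ofReal_sum]
  simp only [Hmul, Hinv, Prod.ext_iff, Pi.add_apply, Pi.neg_apply, map_neg, mul_neg,
    Finset.sum_neg_distrib, Complex.neg_im, add_mul, Finset.sum_add_distrib, neg_mul,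
    Complex.add_im, h]
  constructor <;> ring

lemma add_smul_Hmul_Hinv_sub (x y : H n) (s : ℝ) :
    x + s • (Hmul x (Hinv y) - x) = Hmul x (Hinv (s • y.1, s * y.2)) := by
  rw [eq_comm, ← sub_eq_iff_eq_add', Hmul_Hinv_sub, Hmul_Hinv_sub]
  simp only [Prod.ext_iff, Prod.smul_fst, Prod.smul_snd, smul_neg, smul_eq_mul, Pi.smul_apply,
    Complex.real_smul, map_mul, Complex.conj_ofReal, mul_left_comm _ (s : ℂ), ← Finset.mul_sum,
    Complex.im_ofReal_mul, true_and]
  ring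

lemma norm_Hmul_Hinv_sub_le (x y : H n) (hy : Hnorm y ≤ 1 + Hnorm x) :
    ‖Hmul x (Hinv y) - x‖ ≤ 3 * Hnorm y * (1 + Hnorm x) := by
  have hx := Hnorm_nonneg x
  have hy0 := Hnorm_nonneg y
  rw [Hmul_Hinv_sub, Prod.norm_def]
  refine max_le ?_ ?_
  · rw [norm_neg, pi_norm_le_iff_of_nonneg (by positivity)]
    intro j
    nlinarith [norm_fst_apply_le_Hnorm y j]
  · have h2 := abs_snd_le_Hnorm_sq y
    have hi := abs_im_sum_mul_conj_le x y
    calc ‖-y.2 - 2 * (∑ j, x.1 j * conj (y.1 j)).im‖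
        ≤ |y.2| + 2 * |(∑ j, x.1 j * conj (y.1 j)).im| := by
          rw [Real.norm_eq_abs]
          refine (abs_sub _ _).trans_eq ?_
          rw [abs_neg, abs_mul, abs_two]
      _ ≤ 3 * Hnorm y * (1 + Hnorm x) := by nlinarith

variable {γ : ℝ} (hγ : 1 ≤ γ) (hγ' : ∀ x y : H n, Hnorm (Hmul x y) ≤ γ * (Hnorm x + Hnorm y))
include hγ hγ'

lemma one_add_Hnorm_le_Hmul_Hinv {x y : H n} (hy : 2 * γ * Hnorm y ≤ 1 + Hnorm x) :
    1 + Hnorm x ≤ 2 * γ * (1 + Hnorm (Hmul x (Hinv y))) := by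
  have h := hγ' (Hmul x (Hinv y)) y
  rw [Hmul_Hinv_Hmul] at h
  nlinarith [Hnorm_nonneg (Hmul x (Hinv y))]

lemma one_add_Hnorm_le_of_mem_segment {x y q : H n} (hy : 2 * γ * Hnorm y ≤ 1 + Hnorm x)
    (hq : q ∈ segment ℝ x (Hmul x (Hinv y))) :
    1 + Hnorm x ≤ 2 * γ * (n + 2) * (1 + ‖q‖) := by
  obtain ⟨s, hs, rfl⟩ := segment_eq_image' ℝ x _ ▸ hq
  have hys : 2 * γ * Hnorm ((s • y.1, s * y.2) : H n) ≤ 1 + Hnorm x :=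
    (mul_le_mul_of_nonneg_left (Hnorm_smul_le y hs) (by linarith)).trans hy
  dsimp only
  rw [add_smul_Hmul_Hinv_sub x y s]
  set z := Hmul x (Hinv ((s • y.1, s * y.2) : H n))
  have hz := Hnorm_le_mul_one_add_norm z
  refine (one_add_Hnorm_le_Hmul_Hinv hγ hγ' hys).trans ?_
  rw [mul_assoc (2 * γ)]
  refine mul_le_mul_of_nonneg_left ?_ (by linarith)
  nlinarith [norm_nonneg z]

end Heisenberg

lemma one_add_abs_le_of_mem_segment {r r' ρ : ℝ} (hr' : |r'| ≤ 1 / 2 * (1 + |r|))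
    (hρ : ρ ∈ segment ℝ (r - r') r) : 1 + |r| ≤ 2 * (1 + |ρ|) := by
  rw [segment_eq_uIcc] at hρ
  have hrρ : |r - ρ| ≤ |r'| := by
    rcases Set.mem_uIcc.mp hρ with ⟨h1, h2⟩ | ⟨h1, h2⟩ <;>
      exact abs_le.mpr ⟨by linarith [neg_abs_le r', le_abs_self r'],
        by linarith [neg_abs_le r', le_abs_self r']⟩
  linarith [abs_sub_abs_le_abs_sub r ρ]

section DoubleDifference

variable {V E : Type*} [NormedAddCommGroup V] [NormedSpace ℝ V]
  [NormedAddCommGroup E] [NormedSpace ℝ E]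

lemma hasDerivAt_comp_add_smul {g : V → E} (Q u : V) {t : ℝ}
    (hg : DifferentiableAt ℝ g (Q + t • u)) :
    HasDerivAt (fun t : ℝ => g (Q + t • u)) (fderiv ℝ g (Q + t • u) u) t := by
  simpa [Function.comp_def] using
    hg.hasFDerivAt.comp_hasDerivAt t (((hasDerivAt_id t).smul_const u).const_add Q)

lemma exists_double_sub_eq_iteratedFDeriv_two {f : V → ℝ} (hf : ContDiff ℝ 2 f) (P v w : V) :
    ∃ σ ∈ Set.Ioo (0 : ℝ) 1, ∃ τ ∈ Set.Ioo (0 : ℝ) 1,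
      f (P + v + w) - f (P + w) - f (P + v) + f P =
        iteratedFDeriv ℝ 2 f (P + σ • v + τ • w) ![v, w] := by
  have hf1 : Differentiable ℝ f := hf.differentiable (by norm_num)
  have hf2 : Differentiable ℝ (fderiv ℝ f) :=
    (hf.fderiv_right (m := 1) le_rfl).differentiable one_ne_zero
  have hu : ∀ t : ℝ, HasDerivAt (fun t : ℝ => f (P + v + t • w) - f (P + t • w))
      (fderiv ℝ f (P + v + t • w) w - fderiv ℝ f (P + t • w) w) t := fun t =>
    (hasDerivAt_comp_add_smul _ _ (hf1 _)).sub (hasDerivAt_comp_add_smul _ _ (hf1 _))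
  obtain ⟨τ, hτ, hτeq⟩ := exists_hasDerivAt_eq_slope _ _ one_pos
    (fun t _ => (hu t).continuousAt.continuousWithinAt) (fun t _ => hu t)
  have hg : ∀ s : ℝ, HasDerivAt (fun s : ℝ => fderiv ℝ f (P + τ • w + s • v) w)
      (fderiv ℝ (fderiv ℝ f) (P + τ • w + s • v) v w) s := fun s =>
    (hasDerivAt_comp_add_smul _ _ (hf2 _)).clm_apply (hasDerivAt_const s w) |>.congr_deriv
      (by simp)
  obtain ⟨σ, hσ, hσeq⟩ := exists_hasDerivAt_eq_slope _ _ one_pos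
    (fun s _ => (hg s).continuousAt.continuousWithinAt) (fun s _ => hg s)
  refine ⟨σ, hσ, τ, hτ, ?_⟩
  simp only [one_smul, zero_smul, add_zero, sub_zero, div_one] at hτeq hσeq
  rw [iteratedFDeriv_two_apply, Matrix.cons_val_zero, Matrix.cons_val_one, Matrix.cons_val_zero,
    add_right_comm P (σ • v), hσeq, add_right_comm P (τ • w) v, hτeq]
  ring

lemma exists_abs_mixed_sub_le {X Y : Type*} [NormedAddCommGroup X] [NormedSpace ℝ X]
    [NormedAddCommGroup Y] [NormedSpace ℝ Y] {f : X × Y → ℝ} (hf : ContDiff ℝ 2 f)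
    (x x₁ : X) (y y₁ : Y) :
    ∃ q ∈ segment ℝ x x₁, ∃ s ∈ segment ℝ y y₁,
      |f (x₁, y₁) - f (x, y₁) - f (x₁, y) + f (x, y)| ≤
        ‖iteratedFDeriv ℝ 2 f (q, s)‖ * ‖x₁ - x‖ * ‖y₁ - y‖ := by
  obtain ⟨σ, hσ, τ, hτ, heq⟩ :=
    exists_double_sub_eq_iteratedFDeriv_two hf (x, y) (x₁ - x, 0) (0, y₁ - y)
  refine ⟨x + σ • (x₁ - x), segment_eq_image' ℝ x x₁ ▸ ⟨σ, Set.Ioo_subset_Icc_self hσ, rfl⟩,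
    y + τ • (y₁ - y), segment_eq_image' ℝ y y₁ ▸ ⟨τ, Set.Ioo_subset_Icc_self hτ, rfl⟩, ?_⟩
  simp only [Prod.mk_add_mk, Prod.smul_mk, smul_zero, add_zero, add_sub_cancel] at heq
  rw [heq, ← Real.norm_eq_abs, mul_assoc]
  simpa [Fin.prod_univ_two] using (iteratedFDeriv ℝ 2 f _).le_opNorm ![(x₁ - x, 0), (0, y₁ - y)]

end DoubleDifference

lemma SchwartzMap.exists_one_add_norm_pow_mul_norm_iteratedFDeriv_le
    {V E : Type*} [NormedAddCommGroup V] [NormedSpace ℝ V] [NormedAddCommGroup E]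
    [NormedSpace ℝ E] (f : SchwartzMap V E) (k m : ℕ) :
    ∃ M > 0, ∀ x, (1 + ‖x‖) ^ k * ‖iteratedFDeriv ℝ m f x‖ ≤ M := by
  set M := 2 ^ k * ((Finset.Iic (k, m)).sup fun p => SchwartzMap.seminorm ℝ p.1 p.2) f
  have hM : 0 ≤ M := mul_nonneg (by positivity) (apply_nonneg _ f)
  exact ⟨M + 1, by linarith, fun x =>
    (one_add_le_sup_seminorm_apply (m := (k, m)) le_rfl le_rfl f x).trans (by linarith)⟩

lemma le_div_pow_mul_pow_of_le_mul {a b c d ρ T M : ℝ} {k m : ℕ} (ha : 0 < a) (hb : 0 < b)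
    (hc : 0 ≤ c) (hd : 0 ≤ d) (hT : 0 ≤ T) (hac : a ≤ c * ρ) (hbd : b ≤ d * ρ)
    (hM : ρ ^ (k + m) * T ≤ M) :
    T ≤ c ^ k * d ^ m * M / (a ^ k * b ^ m) := by
  rw [le_div_iff₀ (by positivity)]
  have hcρ := ha.le.trans hac
  calc T * (a ^ k * b ^ m) ≤ T * ((c * ρ) ^ k * (d * ρ) ^ m) := by gcongr
    _ = c ^ k * d ^ m * (ρ ^ (k + m) * T) := by ring
    _ ≤ c ^ k * d ^ m * M := by gcongr

theorem statement4_general (n : ℕ) (F : SchwartzMap (H n × ℝ) ℝ) (L : ℕ)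
    (γ : ℝ) (hγ : 1 < γ)
    (hγ' : ∀ x y : H n, Hnorm (Hmul x y) ≤ γ * (Hnorm x + Hnorm y)) :
    ∃ C > 0, ∀ (x x' : H n) (r r' : ℝ),
      Hnorm x' ≤ 1 / (2 * γ) * (1 + Hnorm x) → |r'| ≤ 1 / 2 * (1 + |r|) →
      |F (Hmul x (Hinv x'), r - r') - F (x, r - r') - F (Hmul x (Hinv x'), r) + F (x, r)|
        ≤ C * Hnorm x' / (1 + Hnorm x) ^ (L + 2 * n + 2) * (|r'| / (1 + |r|) ^ (L + 1)) := by
  obtain ⟨M, hM0, hM⟩ :=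
    F.exists_one_add_norm_pow_mul_norm_iteratedFDeriv_le (L + 2 * n + 3 + (L + 1)) 2
  set c : ℝ := 2 * γ * (n + 2)
  have hc : 0 < c := mul_pos (by linarith) (by positivity)
  refine ⟨3 * (c ^ (L + 2 * n + 3) * 2 ^ (L + 1) * M), by positivity, fun x x' r r' hx' hr' => ?_⟩
  have hA0 : 0 < 1 + Hnorm x := by linarith [Hnorm_nonneg x]
  have hx'γ : 2 * γ * Hnorm x' ≤ 1 + Hnorm x := by
    rwa [one_div_mul_eq_div, le_div_iff₀' (by linarith)] at hx'
  obtain ⟨q, hq, ρ, hρ, hD⟩ :=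
    exists_abs_mixed_sub_le (F.smooth 2) x (Hmul x (Hinv x')) (r - r') r
  have hA : 1 + Hnorm x ≤ c * (1 + ‖(q, ρ)‖) :=
    (one_add_Hnorm_le_of_mem_segment hγ.le hγ' hx'γ hq).trans (by gcongr; exact norm_fst_le (q, ρ))
  have hR : 1 + |r| ≤ 2 * (1 + ‖(q, ρ)‖) :=
    (one_add_abs_le_of_mem_segment hr' hρ).trans (by gcongr; exact norm_snd_le (q, ρ))
  have hT := le_div_pow_mul_pow_of_le_mul hA0 (by positivity) hc.le zero_le_two
    (norm_nonneg _) hA hR (hM (q, ρ))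
  have hv := norm_Hmul_Hinv_sub_le x x' (by nlinarith [Hnorm_nonneg x'])
  rw [sub_sub_cancel, Real.norm_eq_abs] at hD
  calc _ = |F (Hmul x (Hinv x'), r) - F (x, r) - F (Hmul x (Hinv x'), r - r') + F (x, r - r')| := by
        rw [← abs_neg]; ring_nf
    _ ≤ ‖iteratedFDeriv ℝ 2 F (q, ρ)‖ * ‖Hmul x (Hinv x') - x‖ * |r'| := hD
    _ ≤ c ^ (L + 2 * n + 3) * 2 ^ (L + 1) * M / ((1 + Hnorm x) ^ (L + 2 * n + 3) *
        (1 + |r|) ^ (L + 1)) * (3 * Hnorm x' * (1 + Hnorm x)) * |r'| := by gcongr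
    _ = _ := by field_simp; ring

/-- double-difference estimate for a Schwartz function on ℍⁿ × ℝ,
in the regime |(z',u')| ≤ (1/(2γ))(1+|(z,u)|), |r'| ≤ (1/2)(1+|r|). -/
theorem statement4 (n : ℕ) (F : SchwartzMap (H n × ℝ) ℝ) (L : ℕ) (hL : 0 < L)
    (γ : ℝ) (hγ : 1 < γ)
    (hγ' : ∀ x y : H n, Hnorm (Hmul x y) ≤ γ * (Hnorm x + Hnorm y)) :
    ∃ C > 0, ∀ (x x' : H n) (r r' : ℝ),
      Hnorm x' ≤ 1 / (2 * γ) * (1 + Hnorm x) → |r'| ≤ 1 / 2 * (1 + |r|) →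
      |F (Hmul x (Hinv x'), r - r') - F (x, r - r') - F (Hmul x (Hinv x'), r) + F (x, r)|
        ≤ C * Hnorm x' / (1 + Hnorm x) ^ (L + 2 * n + 2) * (|r'| / (1 + |r|) ^ (L + 1)) :=
  statement4_general n F L γ hγ hγ'
end
end

section
/- Let F be a Schwartz function on ℍⁿ × ℝ and L a positive integer. There is a constant C, depending only on L, n and finitely many Schwartz seminorms of F, such that whenever |(z',u')| ≥ (1/(2γ))(1+|(z,u)|) and |r'| ≤ (1/2)(1+|r|), one has |F((z,u)∘(z',u')⁻¹, r−r') − F((z,u), r−r') − F((z,u)∘(z',u')⁻¹, r) + F((z,u), r)| ≤ C [(1+|(z,u)∘(z',u')⁻¹|)^{−(L+2n+2)} + (1+|(z,u)|)^{−(L+2n+2)}] · |r'| (1+|r|)^{−(L+1)}. -/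
open MeasureTheory Complex SchwartzMap Filter
open scoped BigOperators ComplexConjugate FourierTransform ENNReal

noncomputable section

/-!
The double difference is the difference of the two single differences `F (y, r - r') - F (y, r)`
at `y = x ∘ x'⁻¹` and at `y = x`, so it suffices to bound one of them. By the mean value theorem
it is at most `|r'|` times `‖∇F‖` on the segment from `(y, r)` to `(y, r - r')`. Along that
segment the last variable `t` satisfies `1 + |r| ≤ 2 (1 + |t|)` because `|r'| ≤ (1 + |r|) / 2`, so
the Schwartz decay of `∇F` gives the factor `(1 + ‖y‖)^{-A} (1 + |r|)^{-B}`; finally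
`1 + Hnorm y ≤ (2 + √n) (1 + ‖y‖)` turns decay in the product norm into decay in the
homogeneous norm.
-/

lemma one_add_norm_pow_mul_one_add_abs_pow_le {E : Type*} [SeminormedAddCommGroup E]
    (y : E) (t : ℝ) (A B : ℕ) :
    (1 + ‖y‖) ^ A * (1 + |t|) ^ B ≤ (1 + ‖(y, t)‖) ^ (A + B) := by
  rw [pow_add]
  gcongr
  · exact norm_fst_le (y, t)
  · exact norm_snd_le (y, t)

section SchwartzDecay

variable {E V : Type*} [NormedAddCommGroup E] [NormedSpace ℝ E]
  [NormedAddCommGroup V] [NormedSpace ℝ V]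

lemma SchwartzMap.exists_one_add_norm_pow_mul_norm_fderiv_le (f : 𝓢(E, V)) (k : ℕ) :
    ∃ C > 0, ∀ x, (1 + ‖x‖) ^ k * ‖fderiv ℝ f x‖ ≤ C := by
  refine ⟨2 ^ k * (Finset.Iic (k, 1)).sup (fun m => SchwartzMap.seminorm ℝ m.1 m.2) f + 1,
    by positivity, fun x => ?_⟩
  have := one_add_le_sup_seminorm_apply (𝕜 := ℝ) (m := (k, 1)) le_rfl le_rfl f x
  rw [norm_iteratedFDeriv_one] at this
  linarith

lemma SchwartzMap.exists_norm_sub_le_of_abs_le (f : 𝓢(E × ℝ, V)) (A B : ℕ) :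
    ∃ C > 0, ∀ (y : E) (r r' : ℝ), |r'| ≤ 1 / 2 * (1 + |r|) →
      ‖f (y, r - r') - f (y, r)‖ ≤ C * (1 / (1 + ‖y‖) ^ A) * (|r'| / (1 + |r|) ^ B) := by
  obtain ⟨S, hS, hdecay⟩ := f.exists_one_add_norm_pow_mul_norm_fderiv_le (A + B)
  refine ⟨2 ^ B * S, by positivity, fun y r r' hr' => ?_⟩
  have hpos : 0 < (1 + ‖y‖) ^ A * (1 + |r|) ^ B := by positivity
  have hderiv : ∀ p ∈ ({y} ×ˢ Set.uIcc r (r - r') : Set (E × ℝ)),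
      ‖fderiv ℝ f p‖ ≤ 2 ^ B * S / ((1 + ‖y‖) ^ A * (1 + |r|) ^ B) := by
    rintro ⟨y', t⟩ ⟨rfl : y' = y, ht : t ∈ Set.uIcc r (r - r')⟩
    have hrt : 1 + |r| ≤ 2 * (1 + |t|) := by
      have hdist := Set.abs_sub_left_of_mem_uIcc ht
      have htri := abs_sub_abs_le_abs_sub r t
      rw [sub_sub_cancel_left, abs_neg] at hdist
      rw [abs_sub_comm] at htri
      linarith
    rw [le_div_iff₀ hpos]
    calc ‖fderiv ℝ f (y', t)‖ * ((1 + ‖y'‖) ^ A * (1 + |r|) ^ B)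
        ≤ ‖fderiv ℝ f (y', t)‖ * ((1 + ‖y'‖) ^ A * (2 * (1 + |t|)) ^ B) := by gcongr
      _ = 2 ^ B * ((1 + ‖y'‖) ^ A * (1 + |t|) ^ B * ‖fderiv ℝ f (y', t)‖) := by
        rw [mul_pow]; ring
      _ ≤ 2 ^ B * ((1 + ‖(y', t)‖) ^ (A + B) * ‖fderiv ℝ f (y', t)‖) := by
        gcongr
        exact one_add_norm_pow_mul_one_add_abs_pow_le y' t A B
      _ ≤ 2 ^ B * S := by gcongr; exact hdecay _
  have hmvt := ((convex_singleton y).prod (convex_uIcc _ _)).norm_image_sub_le_of_norm_fderiv_le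
    (fun p _ => f.differentiableAt) hderiv
    (Set.mk_mem_prod rfl Set.left_mem_uIcc) (Set.mk_mem_prod rfl Set.right_mem_uIcc)
  have hstep : ‖((y, r - r') : E × ℝ) - (y, r)‖ = |r'| := by simp [Prod.norm_def]
  rw [hstep] at hmvt
  calc ‖f (y, r - r') - f (y, r)‖ ≤ 2 ^ B * S / ((1 + ‖y‖) ^ A * (1 + |r|) ^ B) * |r'| := hmvt
    _ = 2 ^ B * S * (1 / (1 + ‖y‖) ^ A) * (|r'| / (1 + |r|) ^ B) := by field_simp

end SchwartzDecay

lemma one_add_Hnorm_le {n : ℕ} (y : H n) : 1 + Hnorm y ≤ (2 + √n) * (1 + ‖y‖) := by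
  have hz : ∑ j, Complex.normSq (y.1 j) ≤ n * ‖y‖ ^ 2 := by
    calc ∑ j, Complex.normSq (y.1 j) ≤ ∑ _j : Fin n, ‖y‖ ^ 2 := by
          gcongr with j
          rw [Complex.normSq_eq_norm_sq]
          gcongr
          exact (norm_le_pi_norm y.1 j).trans (norm_fst_le y)
      _ = n * ‖y‖ ^ 2 := by simp
  have ht : |y.2| ≤ ‖y‖ := norm_snd_le y
  have hsqrt : √(n : ℝ) ^ 2 = n := Real.sq_sqrt n.cast_nonneg
  have hH : Hnorm y ≤ (1 + √n) * (1 + ‖y‖) := by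
    rw [Hnorm, Real.sqrt_le_left (by positivity)]
    nlinarith [norm_nonneg y, Real.sqrt_nonneg n]
  nlinarith [norm_nonneg y]

lemma exists_abs_sub_le_Hnorm (n : ℕ) (F : 𝓢(H n × ℝ, ℝ)) (A B : ℕ) :
    ∃ C > 0, ∀ (y : H n) (r r' : ℝ), |r'| ≤ 1 / 2 * (1 + |r|) →
      |F (y, r - r') - F (y, r)| ≤ C * (1 / (1 + Hnorm y) ^ A) * (|r'| / (1 + |r|) ^ B) := by
  obtain ⟨C, hC, hdiff⟩ := F.exists_norm_sub_le_of_abs_le A B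
  refine ⟨(2 + √n) ^ A * C, by positivity, fun y r r' hr' => ?_⟩
  have hnorm : 1 / (1 + ‖y‖) ^ A ≤ (2 + √n) ^ A * (1 / (1 + Hnorm y) ^ A) := by
    have : 0 ≤ Hnorm y := Real.sqrt_nonneg _
    rw [mul_one_div, div_le_div_iff₀ (by positivity) (by positivity), one_mul, ← mul_pow]
    gcongr
    exact one_add_Hnorm_le y
  calc |F (y, r - r') - F (y, r)| ≤ C * (1 / (1 + ‖y‖) ^ A) * (|r'| / (1 + |r|) ^ B) := by
        simpa only [Real.norm_eq_abs] using hdiff y r r' hr'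
    _ ≤ C * ((2 + √n) ^ A * (1 / (1 + Hnorm y) ^ A)) * (|r'| / (1 + |r|) ^ B) := by gcongr
    _ = (2 + √n) ^ A * C * (1 / (1 + Hnorm y) ^ A) * (|r'| / (1 + |r|) ^ B) := by ring

theorem statement6_general (n : ℕ) (F : SchwartzMap (H n × ℝ) ℝ) (L : ℕ)
    (γ : ℝ) :
    ∃ C > 0, ∀ (x x' : H n) (r r' : ℝ),
      Hnorm x' ≥ 1 / (2 * γ) * (1 + Hnorm x) → |r'| ≤ 1 / 2 * (1 + |r|) →
      |F (Hmul x (Hinv x'), r - r') - F (x, r - r') - F (Hmul x (Hinv x'), r) + F (x, r)|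
        ≤ C * (1 / (1 + Hnorm (Hmul x (Hinv x'))) ^ (L + 2 * n + 2)
            + 1 / (1 + Hnorm x) ^ (L + 2 * n + 2)) * (|r'| / (1 + |r|) ^ (L + 1)) := by
  obtain ⟨C, hC, hdiff⟩ := exists_abs_sub_le_Hnorm n F (L + 2 * n + 2) (L + 1)
  refine ⟨C, hC, fun x x' r r' _ hr' => ?_⟩
  set y := Hmul x (Hinv x')
  calc |F (y, r - r') - F (x, r - r') - F (y, r) + F (x, r)|
      = |(F (y, r - r') - F (y, r)) - (F (x, r - r') - F (x, r))| := by
        congr 1; ring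
    _ ≤ |F (y, r - r') - F (y, r)| + |F (x, r - r') - F (x, r)| := abs_sub _ _
    _ ≤ _ := add_le_add (hdiff y r r' hr') (hdiff x r r' hr')
    _ = _ := by ring

/-- double-difference estimate, regime |(z',u')| large, |r'| small. -/
theorem statement6 (n : ℕ) (F : SchwartzMap (H n × ℝ) ℝ) (L : ℕ) (hL : 0 < L)
    (γ : ℝ) (hγ : 1 < γ)
    (hγ' : ∀ x y : H n, Hnorm (Hmul x y) ≤ γ * (Hnorm x + Hnorm y)) :
    ∃ C > 0, ∀ (x x' : H n) (r r' : ℝ),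
      Hnorm x' ≥ 1 / (2 * γ) * (1 + Hnorm x) → |r'| ≤ 1 / 2 * (1 + |r|) →
      |F (Hmul x (Hinv x'), r - r') - F (x, r - r') - F (Hmul x (Hinv x'), r) + F (x, r)|
        ≤ C * (1 / (1 + Hnorm (Hmul x (Hinv x'))) ^ (L + 2 * n + 2)
            + 1 / (1 + Hnorm x) ^ (L + 2 * n + 2)) * (|r'| / (1 + |r|) ^ (L + 1)) :=
  statement6_general n F L γ
end
end
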